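/- Let 0 < A < B, Y ≥ 1, and t > 0. Then ∫_{A/2}^{B} min(‖t x‖_ℝ^{−1}, Y) dx ≪_{A,B} max(1, t^{−1}) · log(2 + Y), where the implied constant depends only on A and B. -/
import Mathlib


open Real MeasureTheory intervalIntegral

/-- Distance from a real number to the nearest integer. -/
noncomputable def distNearestInt (x : ℝ) : ℝ := ⨅ m : ℤ, |x - (m : ℝ)|

/-- `min(‖y‖_ℝ^{-1}, Y)`, with the convention that the value is `Y` when `‖y‖_ℝ = 0`. -/
noncomputable def minInvDist (y Y : ℝ) : ℝ :=
  if distNearestInt y = 0 then Y else min (distNearestInt y)⁻¹ Y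

lemma dni_bdd (x : ℝ) : BddBelow (Set.range fun m : ℤ => |x - (m : ℝ)|) :=
  ⟨0, by rintro y ⟨m, rfl⟩; exact abs_nonneg _⟩

lemma dni_le (x : ℝ) (m : ℤ) : distNearestInt x ≤ |x - (m : ℝ)| :=
  ciInf_le (dni_bdd x) m

lemma dni_nonneg (x : ℝ) : 0 ≤ distNearestInt x :=
  Real.iInf_nonneg fun _ => abs_nonneg _

lemma dni_lip (x y : ℝ) : distNearestInt x ≤ |x - y| + distNearestInt y := by
  rw [← sub_le_iff_le_add']
  refine le_ciInf fun m => ?_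
  have h1 := dni_le x m
  linarith [abs_sub_le x y (m : ℝ)]

lemma dni_cont : Continuous distNearestInt := by
  have : LipschitzWith 1 distNearestInt := by
    apply LipschitzWith.of_dist_le_mul
    intro x y
    rw [Real.dist_eq, Real.dist_eq, NNReal.coe_one, one_mul]
    have h1 := dni_lip x y
    have h2 := dni_lip y x
    rw [abs_sub_comm y x] at h2
    rw [abs_sub_le_iff]
    constructor <;> linarith
  exact this.continuous

lemma dni_periodic : Function.Periodic distNearestInt 1 := by
  intro x
  apply le_antisymm
  · refine le_ciInf fun m => ?_
    have := dni_le (x + 1) (m + 1)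
    have h : |x + 1 - ((m + 1 : ℤ) : ℝ)| = |x - m| := by push_cast; ring_nf
    rwa [h] at this
  · refine le_ciInf fun m => ?_
    have := dni_le x (m - 1)
    have h : |x - ((m - 1 : ℤ) : ℝ)| = |x + 1 - m| := by push_cast; ring_nf
    rwa [h] at this

/-- For `u ∈ [0,1]`, the distance to the nearest integer is at least `min u (1-u)`. -/
lemma dni_lower (u : ℝ) (h0 : 0 ≤ u) (h1 : u ≤ 1) : min u (1 - u) ≤ distNearestInt u := by
  refine le_ciInf fun m => ?_
  have ha : u - (m : ℝ) ≤ |u - m| := le_abs_self _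
  have hb : (m : ℝ) - u ≤ |u - m| := by rw [abs_sub_comm]; exact le_abs_self _
  rcases le_or_gt m 0 with hm | hm
  · have : (m : ℝ) ≤ 0 := by exact_mod_cast hm
    calc min u (1 - u) ≤ u := min_le_left _ _
      _ ≤ |u - m| := by linarith
  · have : (1 : ℝ) ≤ m := by exact_mod_cast hm
    calc min u (1 - u) ≤ 1 - u := min_le_right _ _
      _ ≤ |u - m| := by linarith

/-- The truncated reciprocal distance function. -/
noncomputable def gY (Y u : ℝ) : ℝ := (max (distNearestInt u) Y⁻¹)⁻¹

lemma gY_eq (Y : ℝ) (hY : 0 < Y) (u : ℝ) : minInvDist u Y = gY Y u := by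
  unfold minInvDist gY
  by_cases h : distNearestInt u = 0
  · rw [if_pos h, h, max_eq_right (by positivity), inv_inv]
  · rw [if_neg h]
    have hd : 0 < distNearestInt u := lt_of_le_of_ne (dni_nonneg u) (Ne.symm h)
    rcases le_total (distNearestInt u) Y⁻¹ with hc | hc
    · rw [max_eq_right hc, inv_inv, min_eq_right]
      rw [← inv_inv Y]
      exact inv_anti₀ hd hc
    · rw [max_eq_left hc, min_eq_left]
      rw [← inv_inv Y]
      exact inv_anti₀ (by positivity) hc

lemma gY_pos_denom (Y : ℝ) (hY : 0 < Y) (u : ℝ) : 0 < max (distNearestInt u) Y⁻¹ :=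
  lt_of_lt_of_le (by positivity) (le_max_right _ _)

lemma gY_cont (Y : ℝ) (hY : 0 < Y) : Continuous (gY Y) :=
  (dni_cont.max continuous_const).inv₀ fun u => (gY_pos_denom Y hY u).ne'

lemma gY_nonneg (Y : ℝ) (hY : 0 < Y) (u : ℝ) : 0 ≤ gY Y u :=
  le_of_lt (inv_pos.2 (gY_pos_denom Y hY u))

lemma gY_periodic (Y : ℝ) : Function.Periodic (gY Y) 1 := by
  intro x; unfold gY; rw [dni_periodic x]

lemma gY_ptwise (Y : ℝ) (hY : 0 < Y) (u : ℝ) (h0 : 0 ≤ u) (h1 : u ≤ 1) :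
    gY Y u ≤ 2 * (u + Y⁻¹)⁻¹ + 2 * (1 - u + Y⁻¹)⁻¹ := by
  have hc : (0:ℝ) < Y⁻¹ := by positivity
  have hkey : gY Y u ≤ (max (min u (1 - u)) Y⁻¹)⁻¹ := by
    apply inv_anti₀ (lt_of_lt_of_le hc (le_max_right _ _))
    exact max_le_max (dni_lower u h0 h1) le_rfl
  refine hkey.trans ?_
  rcases le_total u (1 - u) with h | h
  · rw [min_eq_left h]
    have hmax : (u + Y⁻¹) / 2 ≤ max u Y⁻¹ := by
      rcases le_total u Y⁻¹ with h' | h'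
      · rw [max_eq_right h']; linarith
      · rw [max_eq_left h']; linarith
    have h1' : (max u Y⁻¹)⁻¹ ≤ ((u + Y⁻¹) / 2)⁻¹ :=
      inv_anti₀ (by positivity) hmax
    have h2' : ((u + Y⁻¹) / 2)⁻¹ = 2 * (u + Y⁻¹)⁻¹ := by
      rw [div_eq_mul_inv, mul_inv, inv_inv]; ring
    have h3' : (0:ℝ) ≤ 2 * (1 - u + Y⁻¹)⁻¹ := by
      have : (0:ℝ) ≤ (1 - u + Y⁻¹)⁻¹ := inv_nonneg.2 (by linarith)
      linarith
    linarith
  · rw [min_eq_right h]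
    have hmax : (1 - u + Y⁻¹) / 2 ≤ max (1 - u) Y⁻¹ := by
      rcases le_total (1 - u) Y⁻¹ with h' | h'
      · rw [max_eq_right h']; linarith
      · rw [max_eq_left h']; linarith
    have h1' : (max (1 - u) Y⁻¹)⁻¹ ≤ ((1 - u + Y⁻¹) / 2)⁻¹ :=
      inv_anti₀ (by linarith) hmax
    have h2' : ((1 - u + Y⁻¹) / 2)⁻¹ = 2 * (1 - u + Y⁻¹)⁻¹ := by
      rw [div_eq_mul_inv, mul_inv, inv_inv]; ring
    have h3' : (0:ℝ) ≤ 2 * (u + Y⁻¹)⁻¹ := by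
      have : (0:ℝ) ≤ (u + Y⁻¹)⁻¹ := inv_nonneg.2 (by linarith)
      linarith
    linarith

/-- The integral of `gY Y` over one period is at most `4 log (2 + Y)`. -/
lemma gY_integral_period (Y : ℝ) (hY : 1 ≤ Y) :
    ∫ u in (0:ℝ)..1, gY Y u ≤ 4 * Real.log (2 + Y) := by
  have hY0 : (0:ℝ) < Y := lt_of_lt_of_le one_pos hY
  have hc : (0:ℝ) < Y⁻¹ := by positivity
  set c := Y⁻¹ with hcdef
  have hcont1 : ContinuousOn (fun u : ℝ => 2 * (u + c)⁻¹) (Set.uIcc 0 1) := by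
    apply ContinuousOn.mul continuousOn_const
    apply ContinuousOn.inv₀ (by fun_prop)
    intro x hx
    rw [Set.uIcc_of_le (by norm_num)] at hx
    have := hx.1; positivity
  have hcont2 : ContinuousOn (fun u : ℝ => 2 * (1 - u + c)⁻¹) (Set.uIcc 0 1) := by
    apply ContinuousOn.mul continuousOn_const
    apply ContinuousOn.inv₀ (by fun_prop)
    intro x hx
    rw [Set.uIcc_of_le (by norm_num)] at hx
    have := hx.2
    have : (0:ℝ) < 1 - x + c := by nlinarith
    linarith
  have hint1 : IntervalIntegrable (fun u : ℝ => 2 * (u + c)⁻¹) volume 0 1 :=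
    hcont1.intervalIntegrable
  have hint2 : IntervalIntegrable (fun u : ℝ => 2 * (1 - u + c)⁻¹) volume 0 1 :=
    hcont2.intervalIntegrable
  have step1 : ∫ u in (0:ℝ)..1, gY Y u ≤
      ∫ u in (0:ℝ)..1, (2 * (u + c)⁻¹ + 2 * (1 - u + c)⁻¹) := by
    apply intervalIntegral.integral_mono_on (by norm_num)
      (((gY_cont Y hY0).continuousOn).intervalIntegrable) (hint1.add hint2)
    intro x hx
    exact gY_ptwise Y hY0 x hx.1 hx.2
  have e1 : ∫ u in (0:ℝ)..1, (u + c)⁻¹ = Real.log (Y + 1) := by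
    have := intervalIntegral.integral_comp_add_right (fun x : ℝ => x⁻¹) c (a := 0) (b := 1)
    rw [this, zero_add, integral_inv_of_pos hc (by linarith)]
    have hq : (1 + c) / c = Y + 1 := by
      rw [hcdef]; field_simp
    rw [hq]
  have e2 : ∫ u in (0:ℝ)..1, (1 - u + c)⁻¹ = Real.log (Y + 1) := by
    have := intervalIntegral.integral_comp_sub_left (fun x : ℝ => x⁻¹) (1 + c) (a := 0) (b := 1)
    have heq : (fun u : ℝ => (1 - u + c)⁻¹) = fun u : ℝ => (1 + c - u)⁻¹ := by
      funext u; ring_nf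
    rw [heq]
    rw [this]
    have h1 : 1 + c - 1 = c := by ring
    have h2 : 1 + c - 0 = 1 + c := by ring
    rw [h1, h2, integral_inv_of_pos hc (by linarith)]
    have hq : (1 + c) / c = Y + 1 := by
      rw [hcdef]; field_simp
    rw [hq]
  have step2 : ∫ u in (0:ℝ)..1, (2 * (u + c)⁻¹ + 2 * (1 - u + c)⁻¹) =
      4 * Real.log (Y + 1) := by
    rw [intervalIntegral.integral_add hint1 hint2,
      intervalIntegral.integral_const_mul, intervalIntegral.integral_const_mul, e1, e2]
    ring
  have hlog : Real.log (Y + 1) ≤ Real.log (2 + Y) :=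
    Real.log_le_log (by linarith) (by linarith)
  calc ∫ u in (0:ℝ)..1, gY Y u ≤ 4 * Real.log (Y + 1) := by rw [← step2]; exact step1
    _ ≤ 4 * Real.log (2 + Y) := by linarith

theorem stmt_11 (A B : ℝ) (hA : 0 < A) (hAB : A < B) :
    ∃ C : ℝ, 0 < C ∧ ∀ Y : ℝ, 1 ≤ Y → ∀ t : ℝ, 0 < t →
      ∫ x in (A / 2)..B, minInvDist (t * x) Y ≤
        C * max 1 t⁻¹ * Real.log (2 + Y) := by
  refine ⟨4 * (B - A / 2 + 1), by nlinarith, ?_⟩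
  intro Y hY t ht
  have hY0 : (0:ℝ) < Y := lt_of_lt_of_le one_pos hY
  have hg_int : ∀ t₁ t₂ : ℝ, IntervalIntegrable (gY Y) volume t₁ t₂ :=
    fun t₁ t₂ => ((gY_cont Y hY0).continuousOn).intervalIntegrable
  have hlogpos : 0 < Real.log (2 + Y) := Real.log_pos (by linarith)
  -- rewrite integrand
  have hrw : ∫ x in (A / 2)..B, minInvDist (t * x) Y = ∫ x in (A / 2)..B, gY Y (t * x) := by
    apply intervalIntegral.integral_congr
    intro x _
    exact gY_eq Y hY0 (t * x)
  -- change of variables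
  have hsub : ∫ x in (A / 2)..B, gY Y (t * x) = t⁻¹ * ∫ u in (t * (A / 2))..(t * B), gY Y u := by
    rw [intervalIntegral.integral_comp_mul_left (gY Y) ht.ne']
    simp [smul_eq_mul]
  set a := t * (A / 2)
  set b := t * B
  have hab : a ≤ b := by
    have : A / 2 ≤ B := by linarith
    exact mul_le_mul_of_nonneg_left this ht.le
  set L := b - a with hL
  have hL0 : 0 ≤ L := by linarith
  set n : ℕ := ⌈L⌉₊ with hn
  have hbn : b ≤ a + (n : ℝ) := by
    have : L ≤ (n : ℝ) := Nat.le_ceil L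
    linarith
  have hnL : (n : ℝ) < L + 1 := Nat.ceil_lt_add_one hL0
  -- the integral over [a, a + n] equals n times the period integral
  have hper : ∫ u in a..(a + (n : ℝ)), gY Y u = (n : ℝ) * ∫ u in (0:ℝ)..1, gY Y u := by
    have := (gY_periodic Y).intervalIntegral_add_zsmul_eq (n : ℤ) a hg_int
    simp only [zsmul_eq_mul, Int.cast_natCast, mul_one] at this
    rw [this]
    rw [(gY_periodic Y).intervalIntegral_add_eq a 0, zero_add]
  have hperiod_bound := gY_integral_period Y hY
  have hI0 : 0 ≤ ∫ u in (0:ℝ)..1, gY Y u :=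
    intervalIntegral.integral_nonneg (by norm_num) (fun u _ => gY_nonneg Y hY0 u)
  -- monotonicity of integral
  have hmono : ∫ u in a..b, gY Y u ≤ ∫ u in a..(a + (n : ℝ)), gY Y u := by
    apply intervalIntegral.integral_mono_interval le_rfl hab hbn
    · filter_upwards with u using gY_nonneg Y hY0 u
    · exact hg_int a (a + n)
  have key : ∫ u in a..b, gY Y u ≤ (L + 1) * (4 * Real.log (2 + Y)) := by
    calc ∫ u in a..b, gY Y u ≤ (n : ℝ) * ∫ u in (0:ℝ)..1, gY Y u := by
          rw [← hper]; exact hmono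
      _ ≤ (L + 1) * (4 * Real.log (2 + Y)) := by
          apply mul_le_mul (le_of_lt hnL) hperiod_bound hI0 (by linarith)
  rw [hrw, hsub]
  have ht' : 0 < t⁻¹ := by positivity
  have hmain : t⁻¹ * ∫ u in a..b, gY Y u ≤ t⁻¹ * ((L + 1) * (4 * Real.log (2 + Y))) :=
    mul_le_mul_of_nonneg_left key ht'.le
  refine hmain.trans ?_
  have hLval : L = t * (B - A / 2) := by rw [hL]; ring
  have hexp : t⁻¹ * ((L + 1) * (4 * Real.log (2 + Y))) =
      ((B - A / 2) + t⁻¹) * (4 * Real.log (2 + Y)) := by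
    rw [hLval]
    field_simp
  rw [hexp]
  have hmax1 : (1:ℝ) ≤ max 1 t⁻¹ := le_max_left _ _
  have hmax2 : t⁻¹ ≤ max 1 t⁻¹ := le_max_right _ _
  have hBA : 0 < B - A / 2 := by linarith
  have hfac : (B - A / 2) + t⁻¹ ≤ (B - A / 2 + 1) * max 1 t⁻¹ := by
    have h1 : B - A / 2 ≤ (B - A / 2) * max 1 t⁻¹ := by nlinarith
    have h2 : t⁻¹ ≤ 1 * max 1 t⁻¹ := by linarith
    nlinarith
  calc ((B - A / 2) + t⁻¹) * (4 * Real.log (2 + Y))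
      ≤ ((B - A / 2 + 1) * max 1 t⁻¹) * (4 * Real.log (2 + Y)) := by
        apply mul_le_mul_of_nonneg_right hfac (by positivity)
    _ = 4 * (B - A / 2 + 1) * max 1 t⁻¹ * Real.log (2 + Y) := by ring
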